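/- Let G be a finite simple graph, let d ≥ 1 be an integer, and let C be a clique of G with at least 2d+1 vertices. Then C is monochromatic, i.e., for every d-cut (A, B) of G, either C ⊆ A or C ⊆ B. -/

import Mathlib

variable {V : Type*}

/-- A `d`-cut of a simple graph `G`: a partition `(A, B)` of the vertex set into two
nonempty parts such that every vertex of `A` has at most `d` neighbors in `B` and
every vertex of `B` has at most `d` neighbors in `A`. -/
def IsDCut (G : SimpleGraph V) (d : ℕ) (A B : Set V) : Prop :=
  A.Nonempty ∧ B.Nonempty ∧ Disjoint A B ∧ A ∪ B = Set.univ ∧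
    (∀ v ∈ A, (G.neighborSet v ∩ B).ncard ≤ d) ∧
    (∀ v ∈ B, (G.neighborSet v ∩ A).ncard ≤ d)

/-- A vertex set `T` is monochromatic if every `d`-cut of `G` has `T` entirely on one side. -/
def Monochromatic (G : SimpleGraph V) (d : ℕ) (T : Set V) : Prop :=
  ∀ A B : Set V, IsDCut G d A B → T ⊆ A ∨ T ⊆ B

/-- The edge cut of a cut `(A, B)`: the set of edges of `G` with one endpoint in `A`
and the other endpoint in `B`. -/
def edgeCut (G : SimpleGraph V) (A B : Set V) : Set (Sym2 V) :=
  {e | e ∈ G.edgeSet ∧ ∃ u v, e = s(u, v) ∧ u ∈ A ∧ v ∈ B}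

/-- A minimal `d`-cut: no `d`-cut has an edge cut that is a proper subset of its edge cut. -/
def IsMinimalDCut (G : SimpleGraph V) (d : ℕ) (A B : Set V) : Prop :=
  IsDCut G d A B ∧ ∀ A' B' : Set V, IsDCut G d A' B' → ¬ edgeCut G A' B' ⊂ edgeCut G A B

/-- A maximal `d`-cut: no `d`-cut has an edge cut that properly contains its edge cut. -/
def IsMaximalDCut (G : SimpleGraph V) (d : ℕ) (A B : Set V) : Prop :=
  IsDCut G d A B ∧ ∀ A' B' : Set V, IsDCut G d A' B' → ¬ edgeCut G A B ⊂ edgeCut G A' B'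

/-! If a clique `C` met both sides of a `d`-cut `(A, B)`, a vertex of `C ∩ B` would have all of
`C ∩ A` among its at most `d` neighbours in `A`, and symmetrically, so `|C| ≤ 2d`. -/

namespace IsDCut

variable {G : SimpleGraph V} {d : ℕ} {A B : Set V}

theorem symm (h : IsDCut G d A B) : IsDCut G d B A :=
  let ⟨hA, hB, hdisj, hcover, hAB, hBA⟩ := h
  ⟨hB, hA, hdisj.symm, Set.union_comm A B ▸ hcover, hBA, hAB⟩

theorem mem_right_of_notMem_left (h : IsDCut G d A B) {v : V} (hv : v ∉ A) : v ∈ B :=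
  (Set.eq_univ_iff_forall.mp h.2.2.2.1 v).resolve_left hv

theorem ncard_inter_add_ncard_inter (h : IsDCut G d A B) (C : Set V) [Finite V] :
    (C ∩ A).ncard + (C ∩ B).ncard = C.ncard := by
  rw [← Set.ncard_union_eq (h.2.2.1.mono Set.inter_subset_right Set.inter_subset_right),
    ← Set.inter_union_distrib_left, h.2.2.2.1, Set.inter_univ]

theorem ncard_clique_inter_left_le [Finite V] (h : IsDCut G d A B) {C : Set V}
    (hC : G.IsClique C) {u : V} (huC : u ∈ C) (huA : u ∉ A) : (C ∩ A).ncard ≤ d := by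
  have hsub : C ∩ A ⊆ G.neighborSet u ∩ A := fun w ⟨hwC, hwA⟩ =>
    ⟨hC huC hwC (ne_of_mem_of_not_mem hwA huA).symm, hwA⟩
  exact (Set.ncard_le_ncard hsub).trans (h.2.2.2.2.2 u (h.mem_right_of_notMem_left huA))

end IsDCut

theorem clique_monochromatic [Fintype V] (G : SimpleGraph V) (d : ℕ)
    (C : Set V) (hC : G.IsClique C) (hsize : 2 * d + 1 ≤ C.ncard) :
    Monochromatic G d C := by
  intro A B hcut
  by_contra! hsplit
  obtain ⟨⟨u, huC, huA⟩, ⟨v, hvC, hvB⟩⟩ := And.imp Set.not_subset.mp Set.not_subset.mp hsplit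
  have hA := hcut.ncard_clique_inter_left_le hC huC huA
  have hB := hcut.symm.ncard_clique_inter_left_le hC hvC hvB
  have hsum := hcut.ncard_inter_add_ncard_inter C
  omega
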